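/- Let X be a smooth Minkowski plane and let z, w ∈ X form a conjugate pair, i.e. z and w are nonzero, linearly independent, z ⊣_B w and w ⊣_B z. Then for every nonzero x ∈ X, cm(x,z)·cm(z,x) + cm(x,w)·cm(w,x) = 1; equivalently, f_x(z)·f_z(x)/(‖z‖·‖x‖) + f_x(w)·f_w(x)/(‖w‖·‖x‖) = 1. (In a Radon plane this is the Pythagorean identity cn(x,z)² + cn(x,b(z))² = 1 for the symmetric cosine cn(x,y) := √(cm(x,y)·cm(y,x)).) -/

import Mathlib

/-!
If `u ⊣_B v` then some norming functional of `u` vanishes at `v`, and in a smooth space this is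
`f_u`; hence `f_z w = f_w z = 0`. Writing `x = a z + b w` gives `f_z x = a ‖z‖` and
`f_w x = b ‖w‖`, so the sum equals `(a f_x z + b f_x w) / ‖x‖ = f_x x / ‖x‖ = 1`.
-/

variable {X : Type*} [NormedAddCommGroup X] [NormedSpace ℝ X]

/-- `f` is the norming functional of `x`: `‖f‖ = 1` and `f x = ‖x‖`. -/
def IsNormingFunctional (x : X) (f : X →L[ℝ] ℝ) : Prop :=
  ‖f‖ = 1 ∧ f x = ‖x‖

/-- A normed space is smooth if every nonzero vector has a unique norming functional. -/
def SmoothNormedSpace (X : Type*) [NormedAddCommGroup X] [NormedSpace ℝ X] : Prop :=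
  ∀ x : X, x ≠ 0 → ∃! f : X →L[ℝ] ℝ, IsNormingFunctional x f

/-- Birkhoff orthogonality: `x ⊣_B y` iff `‖x + t • y‖ ≥ ‖x‖` for all real `t`. -/
def BirkhoffOrth (x y : X) : Prop := ∀ t : ℝ, ‖x‖ ≤ ‖x + t • y‖

lemma IsNormingFunctional.of_norm_le_one {x : X} {f : X →L[ℝ] ℝ} (hx : x ≠ 0) (hf : ‖f‖ ≤ 1)
    (hfx : f x = ‖x‖) : IsNormingFunctional x f := by
  refine ⟨le_antisymm hf ?_, hfx⟩
  have hle : ‖x‖ ≤ ‖f‖ * ‖x‖ := by simpa [hfx] using f.le_opNorm x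
  exact one_le_of_le_mul_right₀ (norm_pos_iff.mpr hx) hle

/-- Birkhoff orthogonality says that `‖x‖` is the norm of `x` in `X ⧸ ℝ ∙ y`; a Hahn–Banach dual
vector of `x` there pulls back to the required functional. -/
lemma BirkhoffOrth.exists_isNormingFunctional_apply_eq_zero {x y : X} (hx : x ≠ 0)
    (h : BirkhoffOrth x y) : ∃ f : X →L[ℝ] ℝ, IsNormingFunctional x f ∧ f y = 0 := by
  set M := ℝ ∙ y
  have hquot : ‖(Submodule.Quotient.mk x : X ⧸ M)‖ = ‖x‖ := by
    refine le_antisymm (Submodule.Quotient.norm_mk_le M x)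
      (QuotientAddGroup.le_norm_iff.2 fun m hm ↦ ?_)
    obtain ⟨t, ht⟩ := Submodule.mem_span_singleton.1 <| (Submodule.Quotient.eq M).1 hm
    simpa [sub_eq_iff_eq_add'.1 ht.symm] using h t
  obtain ⟨g, hg, hgx⟩ := exists_dual_vector'' ℝ (Submodule.Quotient.mk x : X ⧸ M)
  refine ⟨g ∘L M.mkQL, .of_norm_le_one hx ?_ (by simpa [hquot] using hgx), ?_⟩
  · refine ContinuousLinearMap.opNorm_le_bound _ zero_le_one fun u ↦ ?_
    calc ‖g (M.mkQL u)‖ ≤ ‖g‖ * ‖(Submodule.Quotient.mk u : X ⧸ M)‖ := g.le_opNorm _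
      _ ≤ 1 * ‖u‖ := mul_le_mul hg (Submodule.Quotient.norm_mk_le M u) (norm_nonneg _) zero_le_one
  · simp [(Submodule.Quotient.mk_eq_zero M).2 (Submodule.mem_span_singleton_self y)]

lemma BirkhoffOrth.apply_eq_zero_of_smooth (hsm : SmoothNormedSpace X) {x y : X}
    {f : X →L[ℝ] ℝ} (hf : IsNormingFunctional x f) (hx : x ≠ 0) (h : BirkhoffOrth x y) :
    f y = 0 := by
  obtain ⟨g, hg, hgy⟩ := h.exists_isNormingFunctional_apply_eq_zero hx
  rwa [(hsm x hx).unique hf hg]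

lemma cosine_sum_eq_one_of_eq_smul_add_smul {z w x : X} {fz fw fx : X →L[ℝ] ℝ}
    (hz : z ≠ 0) (hw : w ≠ 0) (hx : x ≠ 0)
    (hfz : fz z = ‖z‖) (hfw : fw w = ‖w‖) (hfx : fx x = ‖x‖) (hzw : fz w = 0) (hwz : fw z = 0)
    {a b : ℝ} (hab : a • z + b • w = x) :
    (fx z / ‖z‖) * (fz x / ‖x‖) + (fx w / ‖w‖) * (fw x / ‖x‖) = 1 := by
  have hfzx : fz x = a * ‖z‖ := by simp [← hab, hfz, hzw]
  have hfwx : fw x = b * ‖w‖ := by simp [← hab, hfw, hwz]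
  have hfxx : a * fx z + b * fx w = ‖x‖ := by simpa [← hab] using hfx
  have : ‖z‖ ≠ 0 := norm_ne_zero_iff.mpr hz
  have : ‖w‖ ≠ 0 := norm_ne_zero_iff.mpr hw
  have : ‖x‖ ≠ 0 := norm_ne_zero_iff.mpr hx
  rw [hfzx, hfwx]
  field_simp
  linear_combination hfxx

theorem stmt_14_general (hdim : Module.finrank ℝ X = 2)
    (hsm : SmoothNormedSpace X)
    (F : X → X →L[ℝ] ℝ) (hF : ∀ x : X, x ≠ 0 → IsNormingFunctional x (F x))
    (z w : X) (hz : z ≠ 0) (hw : w ≠ 0) (hind : LinearIndependent ℝ ![z, w])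
    (hzw : BirkhoffOrth z w) (hwz : BirkhoffOrth w z)
    (x : X) (hx : x ≠ 0) :
    (F x z / ‖z‖) * (F z x / ‖x‖) + (F x w / ‖w‖) * (F w x / ‖x‖) = 1 := by
  have hspan : Submodule.span ℝ {z, w} = ⊤ := by
    rw [← Matrix.range_cons_cons_empty]
    exact hind.span_eq_top_of_card_eq_finrank (by simp [hdim])
  obtain ⟨a, b, hab⟩ := Submodule.mem_span_pair.1 (hspan ▸ Submodule.mem_top : x ∈ _)
  exact cosine_sum_eq_one_of_eq_smul_add_smul hz hw hx (hF z hz).2 (hF w hw).2 (hF x hx).2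
    (hzw.apply_eq_zero_of_smooth hsm (hF z hz) hz) (hwz.apply_eq_zero_of_smooth hsm (hF w hw) hw)
    hab

theorem stmt_14 [FiniteDimensional ℝ X] (hdim : Module.finrank ℝ X = 2)
    (hsm : SmoothNormedSpace X)
    (F : X → X →L[ℝ] ℝ) (hF : ∀ x : X, x ≠ 0 → IsNormingFunctional x (F x))
    (z w : X) (hz : z ≠ 0) (hw : w ≠ 0) (hind : LinearIndependent ℝ ![z, w])
    (hzw : BirkhoffOrth z w) (hwz : BirkhoffOrth w z)
    (x : X) (hx : x ≠ 0) :
    (F x z / ‖z‖) * (F z x / ‖x‖) + (F x w / ‖w‖) * (F w x / ‖x‖) = 1 :=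
  stmt_14_general hdim hsm F hF z w hz hw hind hzw hwz x hx
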